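/- arXiv:1712.09084 — 3 statements merged into one kernel-verified Lean document; each statement's English description precedes it below -/
import Mathlib

section
/- Let (M,g) be a connected compact Riemannian manifold with nonempty boundary ∂M, and let λ₁^D(M) be the first Dirichlet eigenvalue of the Laplacian on M. Then for every r > 0 one has m_g(M \ B_r(∂M)) ≤ exp(1 − √(λ₁^D(M)) · r). -/
/-!
STATEMENT 3.
`(M,g)` a connected compact Riemannian manifold with nonempty boundary `∂M`,
`λ₁^D(M)` the first Dirichlet eigenvalue of the Laplacian on `M`.  Then for every
`r > 0` one has `m_g(M \ B_r(∂M)) ≤ exp(1 − √(λ₁^D(M)) · r)`.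

Encoding.  `M` is a compact connected metric space carrying the Riemannian
distance `d_g`; `m` is the normalized Riemannian volume probability measure
`m_g = v_g / v_g(M)`; the boundary `∂M` is a distinguished nonempty closed
subset `bdry`.  The pointwise norm of the gradient `‖∇φ‖(x)` of a Lipschitz
function is its metric slope (local Lipschitz constant) `gradNorm φ x`.  As in
the paper, the first Dirichlet eigenvalue `λ₁^D(M)` is characterized through the
min-max (Rayleigh quotient) principle: it is the least value of
`∫_M ‖∇φ‖² dm_g / ∫_M φ² dm_g` over nonzero Lipschitz functions `φ` vanishing
on `∂M` (hypothesis `heig`, stated as an `IsLeast`); it is positive (`hlam`).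
`B_r(∂M) = {x : d_g(x, ∂M) ≤ r}` is `Metric.cthickening r bdry`.
-/

open MeasureTheory Metric Topology Filter

/-- The metric slope (pointwise local Lipschitz constant) of `f` at `x`:
for a Lipschitz function on a Riemannian manifold this is the norm of the
gradient `‖∇f‖(x)` at a.e. point. -/
noncomputable def gradNorm {X : Type*} [MetricSpace X] (f : X → ℝ) (x : X) : ℝ :=
  limsup (fun y => |f y - f x| / dist y x) (𝓝[≠] x)

lemma exp_sub_le_of_le {a b : ℝ} (h : a ≤ b) :
    Real.exp b - Real.exp a ≤ Real.exp b * (b - a) := by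
  have h1 : Real.exp (a - b) ≥ (a - b) + 1 := Real.add_one_le_exp (a - b)
  have h2 : Real.exp a = Real.exp b * Real.exp (a - b) := by
    rw [← Real.exp_add]; ring_nf
  nlinarith [Real.exp_pos b]

lemma abs_exp_sub_exp (a b : ℝ) :
    |Real.exp a - Real.exp b| ≤ Real.exp (max a b) * |a - b| := by
  rcases le_total a b with h | h
  · rw [abs_sub_comm, abs_of_nonneg (sub_nonneg.2 (Real.exp_le_exp.2 h)),
      max_eq_right h, abs_sub_comm, abs_of_nonneg (sub_nonneg.2 h)]
    exact exp_sub_le_of_le h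
  · rw [abs_of_nonneg (sub_nonneg.2 (Real.exp_le_exp.2 h)),
      max_eq_left h, abs_of_nonneg (sub_nonneg.2 h)]
    exact exp_sub_le_of_le h

lemma abs_min_sub_min (a b c : ℝ) : |min a c - min b c| ≤ |a - b| := by
  have h3 := le_abs_self (a - b)
  have h4 := neg_abs_le (a - b)
  rcases min_cases a c with ⟨e1, f1⟩ | ⟨e1, f1⟩ <;> rcases min_cases b c with ⟨e2, f2⟩ | ⟨e2, f2⟩ <;>
    rw [e1, e2, abs_sub_le_iff] <;> constructor <;> linarith

lemma punctured_neBot {X : Type*} [TopologicalSpace X] [T1Space X] [PreconnectedSpace X]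
    {x y : X} (hxy : x ≠ y) (z : X) : (𝓝[≠] z).NeBot := by
  rw [neBot_iff]
  intro h
  have hop : IsOpen ({z} : Set X) := (isOpen_singleton_iff_punctured_nhds z).2 h
  rcases isClopen_iff.1 ⟨isClosed_singleton, hop⟩ with h1 | h1
  · exact absurd rfl (Set.eq_empty_iff_forall_notMem.1 h1 z)
  · exact hxy ((h1 ▸ Set.mem_univ x : x ∈ ({z} : Set X)).trans
      ((h1 ▸ Set.mem_univ y : y ∈ ({z} : Set X)).symm))

lemma gradNorm_nonneg {X : Type*} [MetricSpace X] {f : X → ℝ} {x : X} [NeBot (𝓝[≠] x)]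
    {K : NNReal} (hf : LipschitzWith K f) : 0 ≤ gradNorm f x := by
  refine le_limsup_of_frequently_le
    ((Eventually.of_forall fun y => div_nonneg (abs_nonneg _) dist_nonneg).frequently) ?_
  refine ⟨(K : ℝ), ?_⟩
  rw [eventually_map]
  filter_upwards [self_mem_nhdsWithin] with y hy
  have hyx : y ≠ x := hy
  rw [div_le_iff₀ (dist_pos.2 hyx)]
  have := hf.dist_le_mul y x
  rwa [Real.dist_eq] at this

lemma gradNorm_eq_zero_of_eventuallyEq {X : Type*} [MetricSpace X] {f : X → ℝ} {x : X}
    [NeBot (𝓝[≠] x)] (h : ∀ᶠ y in 𝓝[≠] x, f y = f x) : gradNorm f x = 0 := by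
  have h' : (fun y => |f y - f x| / dist y x) =ᶠ[𝓝[≠] x] (fun _ => (0 : ℝ)) :=
    h.mono fun y hy => by simp [hy]
  rw [gradNorm, limsup_congr h', limsup_const]

lemma gradNorm_le_of_tendsto {X : Type*} [MetricSpace X] {f : X → ℝ} {x : X}
    [NeBot (𝓝[≠] x)] {u : X → ℝ} {b : ℝ}
    (hb : Tendsto u (𝓝[≠] x) (𝓝 b))
    (hu : ∀ y, |f y - f x| ≤ u y * dist y x) : gradNorm f x ≤ b := by
  rw [← hb.limsup_eq]
  refine limsup_le_limsup ?_ ?_ hb.isBoundedUnder_le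
  · filter_upwards [self_mem_nhdsWithin] with y hy
    have hyx : y ≠ x := hy
    rw [div_le_iff₀ (dist_pos.2 hyx)]
    exact hu y
  · exact isCoboundedUnder_le_of_le (𝓝[≠] x) (x := 0)
      fun y => div_nonneg (abs_nonneg _) dist_nonneg

theorem concentration_around_boundary
    {M : Type*} [MetricSpace M] [CompactSpace M] [ConnectedSpace M] [Nonempty M]
    [MeasurableSpace M] [BorelSpace M]
    (m : Measure M) [IsProbabilityMeasure m]
    (bdry : Set M) (hbne : bdry.Nonempty) (hbcl : IsClosed bdry)
    (lam : ℝ) (hlam : 0 < lam)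
    (heig : IsLeast
      {q : ℝ | ∃ φ : M → ℝ, (∃ K, LipschitzWith K φ) ∧ (∀ x ∈ bdry, φ x = 0) ∧
        (∫ x, φ x ^ 2 ∂m) ≠ 0 ∧
        q = (∫ x, gradNorm φ x ^ 2 ∂m) / (∫ x, φ x ^ 2 ∂m)} lam) :
    ∀ r > (0 : ℝ),
      m (cthickening r bdry)ᶜ ≤ ENNReal.ofReal (Real.exp (1 - Real.sqrt lam * r)) := by
  intro r hr
  set t := Real.sqrt lam with ht
  have htpos : 0 < t := Real.sqrt_pos.2 hlam
  set d : M → ℝ := fun x => infDist x bdry with hd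
  set D : M → ℝ := fun x => min (d x) r with hD
  set φ : M → ℝ := fun x => Real.exp (t * D x) - 1 with hφ
  have hdc : Continuous d := continuous_infDist_pt bdry
  have hDc : Continuous D := hdc.min continuous_const
  have hφc : Continuous φ := (Real.continuous_exp.comp (continuous_const.mul hDc)).sub
    continuous_const
  have hd0 : ∀ x, 0 ≤ d x := fun x => infDist_nonneg
  have hDle : ∀ x, D x ≤ r := fun x => min_le_right _ _
  have hD0 : ∀ x, 0 ≤ D x := fun x => le_min (hd0 x) hr.le
  -- integrability of continuous functions
  have hci : ∀ f : M → ℝ, Continuous f → Integrable f m := fun f hf =>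
    hf.integrable_of_hasCompactSupport
      (IsCompact.of_isClosed_subset isCompact_univ (isClosed_tsupport f) (Set.subset_univ _))
  have hmeas1 : MeasurableSet {x : M | r < d x} := (isOpen_lt continuous_const hdc).measurableSet
  -- the set where d > 0 has positive measure
  have hm0 : m {x : M | 0 < d x} ≠ 0 := by
    obtain ⟨φ₀, _, hv₀, hn₀, _⟩ := heig.1
    intro hzero
    apply hn₀
    have hae : (fun x => φ₀ x ^ 2) =ᵐ[m] 0 := by
      refine (measure_eq_zero_iff_ae_notMem.1 hzero).mono fun x hx => ?_
      have hdx : d x = 0 := le_antisymm (not_lt.1 hx) (hd0 x)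
      have hxb : x ∈ bdry := (hbcl.mem_iff_infDist_zero hbne).2 hdx
      simp [hv₀ x hxb]
    rw [integral_congr_ae hae]
    simp
  -- punctured neighbourhoods are nontrivial
  obtain ⟨x₀, hx₀⟩ : {x : M | 0 < d x}.Nonempty := by
    rw [Set.nonempty_iff_ne_empty]
    intro hemp
    exact hm0 (by rw [hemp]; simp)
  obtain ⟨y₀, hy₀⟩ := id hbne
  have hxy : x₀ ≠ y₀ := by
    intro h
    rw [Set.mem_setOf_eq, h, hd] at hx₀
    simp [infDist_zero_of_mem hy₀] at hx₀
  have hNB : ∀ z : M, (𝓝[≠] z).NeBot := punctured_neBot hxy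
  -- φ is Lipschitz
  have hDlip : ∀ a b : M, |D a - D b| ≤ dist a b := by
    intro a b
    refine (abs_min_sub_min (d a) (d b) r).trans ?_
    have := (lipschitz_infDist_pt bdry).dist_le_mul a b
    rwa [Real.dist_eq, NNReal.coe_one, one_mul] at this
  have hlipkey : ∀ a b : M, |φ a - φ b| ≤ Real.exp (t * max (D a) (D b)) * (t * dist a b) := by
    intro a b
    have h1 : φ a - φ b = Real.exp (t * D a) - Real.exp (t * D b) := by simp [hφ]
    calc |φ a - φ b| = |Real.exp (t * D a) - Real.exp (t * D b)| := by rw [h1]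
      _ ≤ Real.exp (max (t * D a) (t * D b)) * |t * D a - t * D b| := abs_exp_sub_exp _ _
      _ = Real.exp (t * max (D a) (D b)) * (t * |D a - D b|) := by
          rw [← mul_sub, abs_mul, abs_of_nonneg htpos.le, mul_max_of_nonneg _ _ htpos.le]
      _ ≤ Real.exp (t * max (D a) (D b)) * (t * dist a b) := by
          exact mul_le_mul_of_nonneg_left
            (mul_le_mul_of_nonneg_left (hDlip a b) htpos.le) (Real.exp_nonneg _)
  have hlip : LipschitzWith (Real.toNNReal (t * Real.exp (t * r))) φ := by
    apply LipschitzWith.of_dist_le_mul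
    intro a b
    rw [Real.dist_eq, Real.coe_toNNReal _ (by positivity)]
    calc |φ a - φ b| ≤ Real.exp (t * max (D a) (D b)) * (t * dist a b) := hlipkey a b
      _ ≤ Real.exp (t * r) * (t * dist a b) := by
          refine mul_le_mul_of_nonneg_right (Real.exp_le_exp.2 ?_) (by positivity)
          exact mul_le_mul_of_nonneg_left (max_le (hDle a) (hDle b)) htpos.le
      _ = t * Real.exp (t * r) * dist a b := by ring
  -- φ vanishes on the boundary
  have hvan : ∀ x ∈ bdry, φ x = 0 := by
    intro x hx
    have hdx : d x = 0 := by rw [hd]; exact infDist_zero_of_mem hx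
    simp [hφ, hD, hdx, min_eq_left hr.le]
  -- integrability
  have hE2i : Integrable (fun x => Real.exp (2 * (t * D x))) m :=
    hci _ (Real.continuous_exp.comp (continuous_const.mul (continuous_const.mul hDc)))
  have hE1i : Integrable (fun x => Real.exp (t * D x)) m :=
    hci _ (Real.continuous_exp.comp (continuous_const.mul hDc))
  have hφ2i : Integrable (fun x => φ x ^ 2) m := hci _ (hφc.pow 2)
  have hexpsq : ∀ x : M, Real.exp (t * D x) ^ 2 = Real.exp (2 * (t * D x)) := by
    intro x
    rw [← Real.exp_nat_mul]
    norm_num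
  -- positivity of ∫ φ²
  have hsupp : Function.support (fun x => φ x ^ 2) = {x : M | 0 < d x} := by
    ext x
    simp only [Function.mem_support, Set.mem_setOf_eq]
    constructor
    · intro hne
      by_contra hx
      have hdx : d x = 0 := le_antisymm (not_lt.1 hx) (hd0 x)
      apply hne
      simp [hφ, hD, hdx, min_eq_left hr.le]
    · intro hx
      have hDpos : 0 < D x := lt_min hx hr
      have h1 : (1:ℝ) < Real.exp (t * D x) := by
        rw [show (1:ℝ) = Real.exp 0 by simp]
        exact Real.exp_lt_exp.2 (by positivity)
      have : 0 < φ x := by rw [hφ]; simp only; linarith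
      positivity
  have hφ2pos : 0 < ∫ x, φ x ^ 2 ∂m := by
    rw [integral_pos_iff_support_of_nonneg (fun x => sq_nonneg (φ x)) hφ2i, hsupp]
    exact pos_iff_ne_zero.2 hm0
  -- Rayleigh quotient
  have hmem : lam ≤ (∫ x, gradNorm φ x ^ 2 ∂m) / (∫ x, φ x ^ 2 ∂m) :=
    heig.2 ⟨φ, ⟨_, hlip⟩, hvan, ne_of_gt hφ2pos, rfl⟩
  have hR : lam * ∫ x, φ x ^ 2 ∂m ≤ ∫ x, gradNorm φ x ^ 2 ∂m := (le_div_iff₀ hφ2pos).1 hmem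
  -- pointwise bound on the slope
  have hgb : ∀ x : M, gradNorm φ x ^ 2 ≤
      Set.indicator {x : M | d x ≤ r} (fun x => lam * Real.exp (2 * (t * D x))) x := by
    intro x
    haveI := hNB x
    by_cases hx : d x ≤ r
    · rw [Set.indicator_of_mem (show x ∈ {x : M | d x ≤ r} from hx)]
      have hb : gradNorm φ x ≤ t * Real.exp (t * D x) := by
        refine gradNorm_le_of_tendsto (u := fun y => Real.exp (t * max (D y) (D x)) * t) ?_ ?_
        · have hc : Continuous fun y => Real.exp (t * max (D y) (D x)) * t :=
            (Real.continuous_exp.comp (continuous_const.mul (hDc.max continuous_const))).mul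
              continuous_const
          have h2 : Tendsto (fun y => Real.exp (t * max (D y) (D x)) * t) (𝓝[≠] x)
              (𝓝 (Real.exp (t * max (D x) (D x)) * t)) :=
            (hc.tendsto x).mono_left nhdsWithin_le_nhds
          simpa [max_self, mul_comm] using h2
        · intro y
          calc |φ y - φ x| ≤ Real.exp (t * max (D y) (D x)) * (t * dist y x) := hlipkey y x
            _ = Real.exp (t * max (D y) (D x)) * t * dist y x := by ring
      have hnn : 0 ≤ gradNorm φ x := gradNorm_nonneg hlip
      calc gradNorm φ x ^ 2 ≤ (t * Real.exp (t * D x)) ^ 2 := pow_le_pow_left₀ hnn hb 2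
        _ = lam * Real.exp (2 * (t * D x)) := by
            rw [mul_pow, hexpsq x, ht, Real.sq_sqrt hlam.le]
    · rw [Set.indicator_of_notMem (show x ∉ {x : M | d x ≤ r} from hx)]
      have h0 : gradNorm φ x = 0 := by
        apply gradNorm_eq_zero_of_eventuallyEq
        have hopen : IsOpen {y : M | r < d y} := isOpen_lt continuous_const hdc
        have hxmem : x ∈ {y : M | r < d y} := not_le.1 hx
        filter_upwards [mem_nhdsWithin_of_mem_nhds (hopen.mem_nhds hxmem)] with y hy
        have hDy : D y = r := min_eq_right (le_of_lt hy)
        have hDx : D x = r := min_eq_right (le_of_lt (not_le.1 hx))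
        rw [hφ]
        simp only [hDy, hDx]
      rw [h0]
      simp
  -- integral of the slope bound
  set F : ℝ := (m {x : M | r < d x}).toReal with hF
  have hhi : Integrable
      (Set.indicator {x : M | d x ≤ r} (fun x => lam * Real.exp (2 * (t * D x)))) m :=
    (hE2i.const_mul lam).indicator (isClosed_le hdc continuous_const).measurableSet
  have hIg : ∫ x, gradNorm φ x ^ 2 ∂m ≤
      ∫ x, Set.indicator {x : M | d x ≤ r} (fun x => lam * Real.exp (2 * (t * D x))) x ∂m := by
    by_cases hint : Integrable (fun x => gradNorm φ x ^ 2) m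
    · exact integral_mono hint hhi hgb
    · rw [integral_undef hint]
      exact integral_nonneg fun x => Set.indicator_nonneg (fun y _ => by positivity) x
  have hhE : ∫ x, Set.indicator {x : M | d x ≤ r} (fun x => lam * Real.exp (2 * (t * D x))) x ∂m
      = lam * (∫ x, Real.exp (2 * (t * D x)) ∂m) - F * (lam * Real.exp (2 * (t * r))) := by
    have hpt : ∀ x : M,
        Set.indicator {x : M | d x ≤ r} (fun x => lam * Real.exp (2 * (t * D x))) x
        = lam * Real.exp (2 * (t * D x))
          - Set.indicator {x : M | r < d x} (fun _ => lam * Real.exp (2 * (t * r))) x := by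
      intro x
      by_cases hx : d x ≤ r
      · rw [Set.indicator_of_mem (show x ∈ {x : M | d x ≤ r} from hx),
          Set.indicator_of_notMem (show x ∉ {x : M | r < d x} from by simpa using hx)]
        ring
      · rw [Set.indicator_of_notMem (show x ∉ {x : M | d x ≤ r} from hx),
          Set.indicator_of_mem (show x ∈ {x : M | r < d x} from not_le.1 hx)]
        have hDx : D x = r := min_eq_right (le_of_lt (not_le.1 hx))
        rw [hDx]
        ring
    rw [show (fun x => Set.indicator {x : M | d x ≤ r}
        (fun x => lam * Real.exp (2 * (t * D x))) x) = _ from funext hpt]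
    rw [integral_sub (hE2i.const_mul lam) ((integrable_const _).indicator hmeas1),
      integral_const_mul, integral_indicator_const _ hmeas1]
    simp [hF, smul_eq_mul, measureReal_def]
  -- expansion of ∫ φ²
  have hφ2 : ∫ x, φ x ^ 2 ∂m = (∫ x, Real.exp (2 * (t * D x)) ∂m)
      - 2 * (∫ x, Real.exp (t * D x) ∂m) + 1 := by
    have hpt : ∀ x : M, φ x ^ 2
        = Real.exp (2 * (t * D x)) - 2 * Real.exp (t * D x) + 1 := by
      intro x
      rw [← hexpsq x, hφ]
      ring
    simp only [hpt]
    have hmul : Integrable (fun x => 2 * Real.exp (t * D x)) m := hE1i.const_mul 2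
    have hsub : Integrable (fun x => Real.exp (2 * (t * D x)) - 2 * Real.exp (t * D x)) m :=
      hE2i.sub hmul
    rw [integral_add hsub (integrable_const 1), integral_sub hE2i hmul, integral_const_mul]
    simp
  -- E1 bound
  have hE1le : ∫ x, Real.exp (t * D x) ∂m ≤ Real.exp (t * r) := by
    calc ∫ x, Real.exp (t * D x) ∂m ≤ ∫ _x, Real.exp (t * r) ∂m :=
        integral_mono hE1i (integrable_const _)
          fun x => Real.exp_le_exp.2 (mul_le_mul_of_nonneg_left (hDle x) htpos.le)
      _ = Real.exp (t * r) := by simp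
  -- algebra
  have hFnn : 0 ≤ F := ENNReal.toReal_nonneg
  have hchain : lam * ((∫ x, Real.exp (2 * (t * D x)) ∂m)
      - 2 * (∫ x, Real.exp (t * D x) ∂m) + 1)
      ≤ lam * (∫ x, Real.exp (2 * (t * D x)) ∂m) - F * (lam * Real.exp (2 * (t * r))) := by
    rw [← hφ2, ← hhE]
    exact hR.trans hIg
  have hF2 : F * Real.exp (2 * (t * r)) ≤ 2 * (∫ x, Real.exp (t * D x) ∂m) - 1 := by
    nlinarith [hchain, hlam]
  have hfinal : F ≤ Real.exp (1 - t * r) := by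
    have hEpos : 0 < Real.exp (t * r) := Real.exp_pos _
    have h2e : (2 : ℝ) ≤ Real.exp 1 := by nlinarith [Real.add_one_le_exp 1]
    have hGEE : Real.exp (1 - t * r) * (Real.exp (t * r) * Real.exp (t * r))
        = Real.exp 1 * Real.exp (t * r) := by
      rw [← mul_assoc, ← Real.exp_add]
      ring_nf
    have hX : Real.exp (2 * (t * r)) = Real.exp (t * r) * Real.exp (t * r) := by
      rw [← Real.exp_add]; ring_nf
    have key : F * (Real.exp (t * r) * Real.exp (t * r)) ≤ 2 * Real.exp (t * r) - 1 := by
      rw [← hX]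
      linarith [hF2, hE1le]
    nlinarith [key, hGEE, mul_pos hEpos hEpos,
      mul_le_mul_of_nonneg_right h2e hEpos.le]
  -- conclusion
  have hset : (cthickening r bdry)ᶜ = {x : M | r < d x} := by
    ext x
    simp only [Set.mem_compl_iff, Set.mem_setOf_eq, mem_cthickening_iff]
    have hiff : infEDist x bdry ≤ ENNReal.ofReal r ↔ d x ≤ r :=
      ENNReal.le_ofReal_iff_toReal_le (infEdist_ne_top hbne) hr.le
    rw [hiff, not_le]
  rw [hset, ENNReal.le_ofReal_iff_toReal_le (measure_ne_top m _) (Real.exp_nonneg _)]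
  exact hfinal
end

section
/- Let (M,g) be a connected compact Riemannian manifold with nonempty boundary ∂M, and let λ₁^D(M) be the first Dirichlet eigenvalue of the Laplacian on M. Then for all ε > 0 and r > 0 one has (1 + ε² λ₁^D(M)) · m_g(M \ B_{r+ε}(∂M)) ≤ m_g(M \ B_r(∂M)). -/
/-!
STATEMENT 4.
`(M,g)` a connected compact Riemannian manifold with nonempty boundary `∂M`,
`λ₁^D(M)` the first Dirichlet eigenvalue of the Laplacian on `M`.  Then for all
`ε > 0` and `r > 0`,
`(1 + ε² λ₁^D(M)) · m_g(M \ B_{r+ε}(∂M)) ≤ m_g(M \ B_r(∂M))`.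

Encoding (as in the paper).  `M` is a compact connected metric space carrying the
Riemannian distance `d_g`; `m` is the normalized Riemannian volume probability
measure `m_g = v_g / v_g(M)`; the boundary `∂M` is a distinguished nonempty
closed subset `bdry`.  The pointwise norm of the gradient `‖∇φ‖(x)` of a
Lipschitz function is its metric slope `gradNorm φ x`.  The first Dirichlet
eigenvalue `λ₁^D(M)` is characterized through the min-max (Rayleigh quotient)
principle: it is the least value of `∫_M ‖∇φ‖² dm_g / ∫_M φ² dm_g` over nonzero
Lipschitz functions `φ` vanishing on `∂M` (hypothesis `heig`); it is positive
(`hlam`).  `B_r(∂M) = {x : d_g(x, ∂M) ≤ r}` is `Metric.cthickening r bdry`.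
-/

open MeasureTheory Metric Topology Filter

lemma real_limsup_bot (f : α → ℝ) : limsup f (⊥ : Filter α) = 0 := by
  have : {a : ℝ | ∀ᶠ n in Filter.map f ⊥, n ≤ a} = Set.univ := by
    ext a; simp
  rw [limsup, limsSup, this]
  exact Real.sInf_of_not_bddBelow (by simpa using not_bddBelow_univ)

lemma gradNorm_eq_zero_of_eventually_const {X : Type*} [MetricSpace X] {f : X → ℝ} {x : X}
    (h : ∀ᶠ y in 𝓝 x, f y = f x) : gradNorm f x = 0 := by
  have h' : ∀ᶠ y in 𝓝[≠] x, |f y - f x| / dist y x = 0 := by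
    filter_upwards [nhdsWithin_le_nhds h] with y hy
    simp [hy]
  rcases eq_or_neBot (𝓝[≠] x) with hb | hb
  · rw [gradNorm, hb, real_limsup_bot]
  · rw [gradNorm, limsup_congr h', limsup_const]

lemma gradNorm_nonneg_le_one {X : Type*} [MetricSpace X] {f : X → ℝ}
    (hf : LipschitzWith 1 f) (x : X) : 0 ≤ gradNorm f x ∧ gradNorm f x ≤ 1 := by
  have hle : ∀ y : X, |f y - f x| / dist y x ≤ 1 := by
    intro y
    rcases eq_or_ne y x with rfl | hy
    · simp
    · rw [div_le_one (dist_pos.2 hy)]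
      simpa [Real.dist_eq] using hf.dist_le_mul y x
  rcases eq_or_neBot (𝓝[≠] x) with hb | hb
  · rw [gradNorm, hb, real_limsup_bot]; norm_num
  · constructor
    · exact le_limsup_of_frequently_le
        (Eventually.frequently (Eventually.of_forall fun y => by positivity))
        (isBoundedUnder_of ⟨1, hle⟩)
    · exact limsup_le_of_le
        (isCoboundedUnder_le_of_le _ fun y => by positivity)
        (Eventually.of_forall hle)

theorem step_decay_around_boundary
    {M : Type*} [MetricSpace M] [CompactSpace M] [ConnectedSpace M] [Nonempty M]
    [MeasurableSpace M] [BorelSpace M]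
    (m : Measure M) [IsProbabilityMeasure m]
    (bdry : Set M) (hbne : bdry.Nonempty) (hbcl : IsClosed bdry)
    (lam : ℝ) (hlam : 0 < lam)
    (heig : IsLeast
      {q : ℝ | ∃ φ : M → ℝ, (∃ K, LipschitzWith K φ) ∧ (∀ x ∈ bdry, φ x = 0) ∧
        (∫ x, φ x ^ 2 ∂m) ≠ 0 ∧
        q = (∫ x, gradNorm φ x ^ 2 ∂m) / (∫ x, φ x ^ 2 ∂m)} lam) :
    ∀ ε > (0 : ℝ), ∀ r > (0 : ℝ),
      ENNReal.ofReal (1 + ε ^ 2 * lam) * m (cthickening (r + ε) bdry)ᶜ ≤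
        m (cthickening r bdry)ᶜ := by
  intro ε hε r hr
  set A := cthickening (r + ε) bdry with hA
  set B := cthickening r bdry with hB
  have hAmeas : MeasurableSet Aᶜ := (isClosed_cthickening.measurableSet).compl
  by_cases hA0 : m Aᶜ = 0
  · simp [hA0]
  set aR := (m Aᶜ).toReal with haR
  set bR := (m Bᶜ).toReal with hbR
  have haRpos : 0 < aR := ENNReal.toReal_pos hA0 (measure_ne_top m _)
  -- key step for any ε' slightly smaller than ε
  have key : ∀ ε' ∈ Set.Ioo (0:ℝ) ε, (1 + ε' ^ 2 * lam) * aR ≤ bR := by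
    rintro ε' ⟨hε'0, hε'ε⟩
    set r' := r + ε - ε' with hr'
    have hrr' : r < r' := by simp [hr']; linarith
    have hr'lt : r' < r + ε := by simp [hr']; linarith
    -- the test function
    set φ : M → ℝ := fun x => max 0 (min (infDist x bdry - r') ε') with hφ
    have hlip1 : LipschitzWith 1 (fun x : M => infDist x bdry - r') :=
      LipschitzWith.of_dist_le_mul fun x y => by
        simpa [Real.dist_eq] using (Metric.lipschitz_infDist_pt bdry).dist_le_mul x y
    have hφlip : LipschitzWith 1 φ := (hlip1.min_const ε').const_max 0
    have hφnonneg : ∀ x, 0 ≤ φ x := fun x => le_max_left _ _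
    have hφle : ∀ x, φ x ≤ ε' := fun x =>
      max_le hε'0.le (min_le_right _ _)
    have hφ0 : ∀ x ∈ bdry, φ x = 0 := by
      intro x hx
      have : infDist x bdry = 0 := infDist_zero_of_mem hx
      simp only [hφ, this, zero_sub]
      rw [max_eq_left]
      exact le_trans (min_le_left _ _) (by linarith [hrr', hr.le])
    have hAdist : ∀ x, x ∉ A → r + ε < infDist x bdry := by
      intro x hx
      rw [hA, mem_cthickening_iff, not_le] at hx
      exact (ENNReal.ofReal_lt_iff_lt_toReal (by positivity) (infEdist_ne_top hbne)).1 hx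
    have hBdist : ∀ x, r' ≤ infDist x bdry → x ∉ B := by
      intro x hx
      rw [hB, mem_cthickening_iff, not_le]
      exact (ENNReal.ofReal_lt_iff_lt_toReal hr.le (infEdist_ne_top hbne)).2
        (lt_of_lt_of_le hrr' hx)
    have hφA : ∀ x, x ∉ A → φ x = ε' := by
      intro x hx
      have h1 : ε' ≤ infDist x bdry - r' := by
        have := hAdist x hx; simp [hr']; linarith
      simp only [hφ]
      rw [min_eq_right h1, max_eq_right hε'0.le]
    -- the transition region
    set S : Set M := {x | r' ≤ infDist x bdry} ∩ A with hS
    have hSmeas : MeasurableSet S :=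
      ((isClosed_le continuous_const (Metric.continuous_infDist_pt bdry)).measurableSet).inter
        isClosed_cthickening.measurableSet
    -- integrability of φ²
    have hφc : Continuous φ := hφlip.continuous
    have hφ2int : Integrable (fun x => φ x ^ 2) m := by
      refine (integrable_const (ε' ^ 2 : ℝ)).mono' ((hφc.pow 2).aestronglyMeasurable)
        (ae_of_all _ fun x => ?_)
      rw [Real.norm_eq_abs, abs_of_nonneg (by positivity)]
      exact pow_le_pow_left₀ (hφnonneg x) (hφle x) 2
    -- lower bound for ∫ φ²
    have hlow : ε' ^ 2 * aR ≤ ∫ x, φ x ^ 2 ∂m := by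
      have hind : Integrable ((Aᶜ).indicator fun _ => (ε' ^ 2 : ℝ)) m :=
        (integrable_const _).indicator hAmeas
      have hpt : ∀ x, (Aᶜ).indicator (fun _ => (ε' ^ 2 : ℝ)) x ≤ φ x ^ 2 := by
        intro x
        by_cases hx : x ∈ Aᶜ
        · rw [Set.indicator_of_mem hx, hφA x hx]
        · rw [Set.indicator_of_notMem hx]; positivity
      calc ε' ^ 2 * aR = ∫ x, (Aᶜ).indicator (fun _ => (ε' ^ 2 : ℝ)) x ∂m := by
            rw [integral_indicator_const _ hAmeas, smul_eq_mul, mul_comm, measureReal_def, haR]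
        _ ≤ ∫ x, φ x ^ 2 ∂m := integral_mono hind hφ2int hpt
    have hpos : 0 < ∫ x, φ x ^ 2 ∂m := lt_of_lt_of_le (by positivity) hlow
    -- Rayleigh quotient bound
    have hmem : (∫ x, gradNorm φ x ^ 2 ∂m) / (∫ x, φ x ^ 2 ∂m) ∈
        {q : ℝ | ∃ φ : M → ℝ, (∃ K, LipschitzWith K φ) ∧ (∀ x ∈ bdry, φ x = 0) ∧
          (∫ x, φ x ^ 2 ∂m) ≠ 0 ∧
          q = (∫ x, gradNorm φ x ^ 2 ∂m) / (∫ x, φ x ^ 2 ∂m)} :=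
      ⟨φ, ⟨1, hφlip⟩, hφ0, hpos.ne', rfl⟩
    have hnum : lam * ∫ x, φ x ^ 2 ∂m ≤ ∫ x, gradNorm φ x ^ 2 ∂m :=
      (le_div_iff₀ hpos).1 (heig.2 hmem)
    -- upper bound for ∫ |∇φ|²
    have hpt : ∀ x, gradNorm φ x ^ 2 ≤ S.indicator (fun _ => (1 : ℝ)) x := by
      intro x
      by_cases hx : x ∈ S
      · rw [Set.indicator_of_mem hx]
        obtain ⟨h0, h1⟩ := gradNorm_nonneg_le_one hφlip x
        nlinarith
      · rw [Set.indicator_of_notMem hx]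
        have hz : gradNorm φ x = 0 := by
          apply gradNorm_eq_zero_of_eventually_const
          by_cases hd : infDist x bdry < r'
          · have hU : IsOpen {y : M | infDist y bdry < r'} :=
              isOpen_lt (Metric.continuous_infDist_pt bdry) continuous_const
            have hφloc : ∀ y : M, infDist y bdry < r' → φ y = 0 := by
              intro y hy
              simp only [hφ]
              rw [max_eq_left (le_trans (min_le_left _ _) (by linarith))]
            filter_upwards [hU.mem_nhds hd] with y hy
            rw [hφloc y hy, hφloc x hd]
          · have hxA : x ∉ A := by
              intro hxA
              exact hx ⟨not_lt.1 hd, hxA⟩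
            filter_upwards [isClosed_cthickening.isOpen_compl.mem_nhds hxA] with y hy
            rw [hφA y hy, hφA x hxA]
        rw [hz]; norm_num
    have hup : ∫ x, gradNorm φ x ^ 2 ∂m ≤ (m S).toReal := by
      have hSint : Integrable (S.indicator fun _ => (1 : ℝ)) m :=
        (integrable_const _).indicator hSmeas
      calc ∫ x, gradNorm φ x ^ 2 ∂m ≤ ∫ x, S.indicator (fun _ => (1 : ℝ)) x ∂m :=
            integral_mono_of_nonneg (ae_of_all _ fun x => by positivity) hSint
              (ae_of_all _ hpt)
        _ = (m S).toReal := by rw [integral_indicator_const _ hSmeas, smul_eq_mul, mul_one, measureReal_def]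
    -- measure arithmetic
    have hSB : (m S).toReal + aR ≤ bR := by
      have hdisj : Disjoint S Aᶜ :=
        disjoint_compl_right.mono_left Set.inter_subset_right
      have hsub : S ∪ Aᶜ ⊆ Bᶜ := by
        rintro x (hx | hx)
        · exact hBdist x hx.1
        · exact hBdist x (le_of_lt (lt_trans hr'lt (hAdist x hx)))
      rw [haR, ← ENNReal.toReal_add (measure_ne_top m _) (measure_ne_top m _),
        ← measure_union hdisj hAmeas]
      exact ENNReal.toReal_mono (measure_ne_top m _) (measure_mono hsub)
    have h1 : lam * (ε' ^ 2 * aR) ≤ lam * ∫ x, φ x ^ 2 ∂m :=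
      mul_le_mul_of_nonneg_left hlow hlam.le
    nlinarith [h1, hnum, hup, hSB]
  -- take the limit ε' → ε
  have hineq : (1 + ε ^ 2 * lam) * aR ≤ bR := by
    have hlim : Tendsto (fun t : ℝ => (1 + t ^ 2 * lam) * aR) (𝓝[<] ε)
        (𝓝 ((1 + ε ^ 2 * lam) * aR)) :=
      (Continuous.tendsto (by continuity) ε).mono_left nhdsWithin_le_nhds
    refine le_of_tendsto hlim ?_
    filter_upwards [Ioo_mem_nhdsLT_of_mem ⟨hε, le_refl ε⟩] with t ht
    exact key t ht
  calc ENNReal.ofReal (1 + ε ^ 2 * lam) * m Aᶜ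
      = ENNReal.ofReal ((1 + ε ^ 2 * lam) * aR) := by
        rw [ENNReal.ofReal_mul (by positivity), haR,
          ENNReal.ofReal_toReal (measure_ne_top m _)]
    _ ≤ ENNReal.ofReal bR := ENNReal.ofReal_le_ofReal hineq
    _ = m Bᶜ := by rw [hbR, ENNReal.ofReal_toReal (measure_ne_top m _)]
end

section
/- Let (X, μ) be a measure space, Ω ⊆ X a measurable subset, f : X → ℝ a measurable function, and c > 0 a constant such that μ(Ω ∩ {x : |f(x)| > r}) ≤ exp(1 − c r) for every r > 0. Then for every p ≥ 1 one has (∫_Ω |f|^p dμ)^{1/p} ≤ e · Γ(p+1)^{1/p} / c, where Γ is the gamma function. -/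
/-!
STATEMENT 11.
`(X, μ)` a measure space, `Ω ⊆ X` measurable, `f : X → ℝ` measurable, `c > 0`, with
`μ(Ω ∩ {x : |f x| > r}) ≤ exp(1 − c r)` for every `r > 0`.  Then for every `p ≥ 1`,
`(∫_Ω |f|^p dμ)^{1/p} ≤ e · Γ(p+1)^{1/p} / c`, where `Γ` is the gamma function.
-/

open MeasureTheory

set_option maxHeartbeats 1000000

theorem Lp_bound_of_exponential_tail
    {X : Type*} [MeasurableSpace X] (μ : Measure X)
    (Ω : Set X) (hΩ : MeasurableSet Ω) (f : X → ℝ) (hf : Measurable f)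
    (c : ℝ) (hc : 0 < c)
    (htail : ∀ r > (0 : ℝ),
      μ (Ω ∩ {x | r < |f x|}) ≤ ENNReal.ofReal (Real.exp (1 - c * r))) :
    ∀ p ≥ (1 : ℝ),
      (∫ x in Ω, |f x| ^ p ∂μ) ^ (1 / p) ≤
        Real.exp 1 * Real.Gamma (p + 1) ^ (1 / p) / c := by
  intro p hp
  have hp0 : (0 : ℝ) < p := lt_of_lt_of_le one_pos hp
  have hΓp : 0 < Real.Gamma p := Real.Gamma_pos_of_pos hp0
  have hΓp1 : 0 < Real.Gamma (p + 1) := Real.Gamma_pos_of_pos (by linarith)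
  set M : ℝ := Real.exp 1 * Real.Gamma (p + 1) / c ^ p with hM
  have hM0 : 0 ≤ M := by positivity
  -- integrability of the comparison function
  have hint : IntegrableOn (fun t : ℝ => Real.exp (1 - c * t) * t ^ (p - 1))
      (Set.Ioi (0 : ℝ)) := by
    have h1 : IntegrableOn (fun t : ℝ => t ^ (p - 1) * Real.exp (-c * t ^ (1 : ℝ)))
        (Set.Ioi (0 : ℝ)) :=
      integrableOn_rpow_mul_exp_neg_mul_rpow (by linarith) one_pos hc
    have h2 : IntegrableOn (fun t : ℝ => Real.exp 1 * (t ^ (p - 1) * Real.exp (-(c * t))))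
        (Set.Ioi (0 : ℝ)) := by
      refine ((h1.congr_fun (fun t ht => ?_) measurableSet_Ioi)).const_mul (Real.exp 1)
      rw [Real.rpow_one, neg_mul]
    refine h2.congr_fun (fun t ht => ?_) measurableSet_Ioi
    simp only [Real.exp_sub, Real.exp_neg]
    ring
  -- value of the comparison integral
  have hval : ∫ t in Set.Ioi (0 : ℝ), Real.exp (1 - c * t) * t ^ (p - 1) =
      Real.exp 1 * ((1 / c) ^ p * Real.Gamma p) := by
    have h0 : ∫ t in Set.Ioi (0 : ℝ), t ^ (p - 1) * Real.exp (-(c * t)) =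
        (1 / c) ^ p * Real.Gamma p := Real.integral_rpow_mul_exp_neg_mul_Ioi hp0 hc
    calc ∫ t in Set.Ioi (0 : ℝ), Real.exp (1 - c * t) * t ^ (p - 1)
        = ∫ t in Set.Ioi (0 : ℝ), Real.exp 1 * (t ^ (p - 1) * Real.exp (-(c * t))) := by
          refine setIntegral_congr_fun measurableSet_Ioi (fun t ht => ?_)
          rw [Real.exp_sub, Real.exp_neg]; ring
      _ = Real.exp 1 * ((1 / c) ^ p * Real.Gamma p) := by
          rw [integral_const_mul, h0]
  -- layer cake formula
  have key := lintegral_rpow_eq_lintegral_meas_lt_mul (μ.restrict Ω)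
      (f := fun x => |f x|) (Filter.Eventually.of_forall fun x => abs_nonneg _)
      hf.abs.aemeasurable hp0
  have habs : ∀ t : ℝ, MeasurableSet {a : X | t < |f a|} := fun t =>
    measurableSet_lt measurable_const hf.abs
  -- bound on the lintegral
  have hbound : ∫⁻ x in Ω, ENNReal.ofReal (|f x| ^ p) ∂μ ≤ ENNReal.ofReal M := by
    rw [key]
    have hle : ∫⁻ t in Set.Ioi (0 : ℝ),
          (μ.restrict Ω) {a | t < |f a|} * ENNReal.ofReal (t ^ (p - 1))
        ≤ ∫⁻ t in Set.Ioi (0 : ℝ),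
          ENNReal.ofReal (Real.exp (1 - c * t) * t ^ (p - 1)) := by
      refine setLIntegral_mono' measurableSet_Ioi (fun t ht => ?_)
      rw [Measure.restrict_apply (habs t)]
      have h1 : μ ({a | t < |f a|} ∩ Ω) ≤ ENNReal.ofReal (Real.exp (1 - c * t)) := by
        rw [Set.inter_comm]; exact htail t ht
      calc μ ({a | t < |f a|} ∩ Ω) * ENNReal.ofReal (t ^ (p - 1))
          ≤ ENNReal.ofReal (Real.exp (1 - c * t)) * ENNReal.ofReal (t ^ (p - 1)) :=
            mul_le_mul_left h1 _
        _ = ENNReal.ofReal (Real.exp (1 - c * t) * t ^ (p - 1)) :=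
            (ENNReal.ofReal_mul (Real.exp_nonneg _)).symm
    have heq : ∫⁻ t in Set.Ioi (0 : ℝ),
        ENNReal.ofReal (Real.exp (1 - c * t) * t ^ (p - 1)) =
        ENNReal.ofReal (Real.exp 1 * ((1 / c) ^ p * Real.Gamma p)) := by
      rw [← hval, ← ofReal_integral_eq_lintegral_ofReal hint]
      filter_upwards [self_mem_ae_restrict (measurableSet_Ioi : MeasurableSet (Set.Ioi (0:ℝ)))]
        with t ht
      have : (0:ℝ) < t := ht
      positivity
    calc ENNReal.ofReal p * ∫⁻ t in Set.Ioi (0 : ℝ),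
          (μ.restrict Ω) {a | t < |f a|} * ENNReal.ofReal (t ^ (p - 1))
        ≤ ENNReal.ofReal p *
          ENNReal.ofReal (Real.exp 1 * ((1 / c) ^ p * Real.Gamma p)) := by
          rw [← heq]; exact mul_le_mul_right hle _
      _ = ENNReal.ofReal M := by
          rw [← ENNReal.ofReal_mul hp0.le, hM, Real.Gamma_add_one hp0.ne',
            Real.div_rpow (by norm_num) hc.le, Real.one_rpow]
          congr 1
          field_simp
  -- express the Bochner integral via the lintegral
  have hrepr : ∫ x in Ω, |f x| ^ p ∂μ =
      (∫⁻ x in Ω, ENNReal.ofReal (|f x| ^ p) ∂μ).toReal := by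
    refine integral_eq_lintegral_of_nonneg_ae
      (Filter.Eventually.of_forall fun x => by positivity) ?_
    exact (hf.abs.pow measurable_const).aestronglyMeasurable
  have hI : ∫ x in Ω, |f x| ^ p ∂μ ≤ M := by
    rw [hrepr]
    exact ENNReal.toReal_le_of_le_ofReal hM0 hbound
  -- conclude
  have h1 : (∫ x in Ω, |f x| ^ p ∂μ) ^ (1 / p) ≤ M ^ (1 / p) :=
    Real.rpow_le_rpow (integral_nonneg fun x => by positivity) hI (by positivity)
  refine h1.trans ?_
  have hMrw : M ^ (1 / p) = Real.exp 1 ^ (1 / p) * Real.Gamma (p + 1) ^ (1 / p) / c := by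
    rw [hM, Real.div_rpow (by positivity) (by positivity),
      Real.mul_rpow (Real.exp_nonneg 1) hΓp1.le,
      ← Real.rpow_mul hc.le, mul_one_div_cancel hp0.ne', Real.rpow_one]
  rw [hMrw]
  have hexp : Real.exp 1 ^ (1 / p) ≤ Real.exp 1 := by
    calc Real.exp 1 ^ (1 / p) ≤ Real.exp 1 ^ (1 : ℝ) :=
          Real.rpow_le_rpow_of_exponent_le (Real.one_le_exp zero_le_one)
            (by rw [div_le_one hp0]; exact hp)
      _ = Real.exp 1 := Real.rpow_one _
  gcongr
end
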